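/- Let k > 3 be an integer. Then the positive integer solutions of the equation x² − (k² − 4)·y² = 4 are exactly the pairs (x, y) = (V_n(k,−1), U_n(k,−1)) for n ≥ 1. -/

import Mathlib

/-- Generalized Fibonacci sequence: `U 0 = 0`, `U 1 = 1`, `U (n+2) = k * U (n+1) + s * U n`. -/
def genFib (k s : ℤ) : ℕ → ℤ
  | 0 => 0
  | 1 => 1
  | n + 2 => k * genFib k s (n + 1) + s * genFib k s n

/-- Generalized Lucas sequence: `V 0 = 2`, `V 1 = k`, `V (n+2) = k * V (n+1) + s * V n`. -/
def genLucas (k s : ℤ) : ℕ → ℤ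
  | 0 => 2
  | 1 => k
  | n + 2 => k * genLucas k s (n + 1) + s * genLucas k s n

lemma key (k : ℤ) : ∀ n : ℕ,
    (genLucas k (-1) n) ^ 2 - (k ^ 2 - 4) * (genFib k (-1) n) ^ 2 = 4 ∧
    2 * genLucas k (-1) (n + 1) = k * genLucas k (-1) n + (k ^ 2 - 4) * genFib k (-1) n ∧
    2 * genFib k (-1) (n + 1) = genLucas k (-1) n + k * genFib k (-1) n := by
  intro n
  induction n with
  | zero => refine ⟨?_, ?_, ?_⟩ <;> simp [genFib, genLucas] <;> ring
  | succ m ih =>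
    obtain ⟨h1, h2, h3⟩ := ih
    set p := genLucas k (-1) m with hp
    set q := genFib k (-1) m with hq
    set P := genLucas k (-1) (m + 1) with hP
    set Q := genFib k (-1) (m + 1) with hQ
    refine ⟨?_, ?_, ?_⟩
    · have aux : 4 * (P ^ 2 - (k ^ 2 - 4) * Q ^ 2) = 16 := by
        linear_combination (2 * P + k * p + (k ^ 2 - 4) * q) * h2
          - (k ^ 2 - 4) * (2 * Q + p + k * q) * h3 + 4 * h1
      linarith [aux]
    · have hV : genLucas k (-1) (m + 2) = k * P + (-1) * p := rfl
      have hh : 2 * (k * P - 2 * p - (k ^ 2 - 4) * Q) = 0 := by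
        linear_combination k * h2 - (k ^ 2 - 4) * h3
      rw [hV]; linarith [hh]
    · have hU : genFib k (-1) (m + 2) = k * Q + (-1) * q := rfl
      have hh : 2 * (k * Q - 2 * q - P) = 0 := by
        linear_combination k * h3 - h2
      rw [hU]; linarith [hh]

lemma descent (k : ℤ) (hk : 3 < k) : ∀ m : ℕ, ∀ x y : ℤ, 0 < x → 0 < y → y.natAbs ≤ m →
    x ^ 2 - (k ^ 2 - 4) * y ^ 2 = 4 →
    ∃ n : ℕ, 1 ≤ n ∧ x = genLucas k (-1) n ∧ y = genFib k (-1) n := by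
  intro m
  induction m with
  | zero => intro x y hx hy hm _; omega
  | succ m ih =>
    intro x y hx hy hm heq
    rcases eq_or_lt_of_le (show (0:ℤ) + 1 ≤ y from hy) with h1 | h2
    · -- y = 1
      have hy1 : y = 1 := h1.symm
      subst hy1
      have h9 : (x - k) * (x + k) = 0 := by linear_combination heq
      have hxk : x = k := by
        rcases mul_eq_zero.mp h9 with h | h
        · linarith
        · linarith
      exact ⟨1, le_refl 1, by simp [genLucas, hxk], by simp [genFib]⟩
    · -- y ≥ 2
      have hy2 : 2 ≤ y := h2
      have hprod : (k * y - x) * (k * y + x) = 2 * (2 * y ^ 2 - 2) := by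
        linear_combination -heq
      have hev2 : Even ((k * y - x) * (k * y + x)) :=
        ⟨2 * y ^ 2 - 2, by linear_combination hprod⟩
      have heven : Even (k * y - x) := by
        rcases Int.even_mul.mp hev2 with h | h
        · exact h
        · have h' : Even (k * y + x - 2 * x) := h.sub (even_two_mul x)
          have e : k * y - x = k * y + x - 2 * x := by ring
          rwa [e]
      obtain ⟨c, hc⟩ := heven
      have hxc : x = k * y - 2 * c := by linarith
      have hyy : 4 ≤ y * y := by nlinarith
      have hxlt : x < k * y := by
        by_contra h
        push_neg at h
        have h4 : (k * y) * (k * y) ≤ x * x :=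
          mul_self_le_mul_self (mul_nonneg (by linarith) (by linarith)) h
        linarith [h4, heq, hyy]
      have hcpos : 0 < c := by linarith
      have hxgt : (k - 2) * y < x := by
        by_contra h
        push_neg at h
        have h4 : x * x ≤ ((k - 2) * y) * ((k - 2) * y) :=
          mul_self_le_mul_self (by linarith) h
        have hpos : (0:ℤ) < (k - 2) * y ^ 2 := mul_pos (by linarith) (by positivity)
        linarith [h4, heq, hpos]
      have hclt : c < y := by linarith
      have hkx : (k ^ 2 - 4) * y < k * x := by
        by_contra h
        push_neg at h
        have h4 : (k * x) * (k * x) ≤ ((k ^ 2 - 4) * y) * ((k ^ 2 - 4) * y) :=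
          mul_self_le_mul_self (mul_nonneg (by linarith) hx.le) h
        have hk4 : (0:ℤ) < k ^ 2 - 4 := by nlinarith
        have tpos : (0:ℤ) < (k ^ 2 - 4) * y ^ 2 := mul_pos hk4 (by positivity)
        have e : (k * x) * (k * x) = k ^ 2 * ((k ^ 2 - 4) * y ^ 2) + 4 * k ^ 2 := by
          linear_combination k ^ 2 * heq
        linarith [h4, e, tpos, sq_nonneg k]
      have e3 : 2 * (k * c) = k ^ 2 * y - k * x := by linear_combination (-k) * hc
      have hx'pos : 0 < 2 * y - k * c := by linarith [hkx, e3]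
      have heq2 : (k * y - 2 * c) ^ 2 - (k ^ 2 - 4) * y ^ 2 = 4 := by rw [← hxc]; exact heq
      have heq' : (2 * y - k * c) ^ 2 - (k ^ 2 - 4) * c ^ 2 = 4 := by
        linear_combination heq2
      obtain ⟨n, hn1, hnx, hny⟩ := ih (2 * y - k * c) c hx'pos hcpos (by omega) heq'
      obtain ⟨_, h2', h3'⟩ := key k n
      refine ⟨n + 1, by omega, ?_, ?_⟩
      · have e1 : 2 * x = 2 * genLucas k (-1) (n + 1) := by
          rw [h2', ← hnx, ← hny]; linear_combination 2 * hxc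
        linarith
      · have e2 : 2 * y = 2 * genFib k (-1) (n + 1) := by
          rw [h3', ← hnx, ← hny]; ring
        linarith

theorem solutions_four_k_sq_sub_four (k : ℤ) (hk : 3 < k) (x y : ℤ) (hx : 0 < x) (hy : 0 < y) :
    x ^ 2 - (k ^ 2 - 4) * y ^ 2 = 4 ↔
      ∃ n : ℕ, 1 ≤ n ∧ x = genLucas k (-1) n ∧ y = genFib k (-1) n := by
  constructor
  · intro heq
    exact descent k hk y.natAbs x y hx hy le_rfl heq
  · rintro ⟨n, hn, rfl, rfl⟩
    exact (key k n).1
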